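/- Let (V,[·,·,·]) be a ternary Nambu algebra. Then the binary bracket on W = V⊗V defined by [x1⊗x2, y1⊗y2]_W = [x1,x2,y1]⊗y2 + y1⊗[x1,x2,y2] satisfies the Leibniz identity [a,[b,c]_W]_W = [[a,b]_W,c]_W + [b,[a,c]_W]_W for all a,b,c ∈ W. -/
import Mathlib


open TensorProduct

/-- The binary bracket on `W = V ⊗ V` associated to a ternary bracket `b` on `V`, the
bilinear extension of `[x1⊗x2, y1⊗y2] = [x1,x2,y1]⊗y2 + y1⊗[x1,x2,y2]`. -/
noncomputable def tbracket {K V : Type*} [Field K] [AddCommGroup V] [Module K V]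
    (b : V →ₗ[K] V →ₗ[K] V →ₗ[K] V) :
    (V ⊗[K] V) →ₗ[K] (V ⊗[K] V) →ₗ[K] (V ⊗[K] V) :=
  TensorProduct.lift
    ((LinearMap.llcomp K V (V →ₗ[K] V) ((V ⊗[K] V) →ₗ[K] (V ⊗[K] V))
        (LinearMap.rTensorHom V + LinearMap.lTensorHom V)) ∘ₗ b)

theorem stmt14 {K V : Type*} [Field K] [AddCommGroup V] [Module K V]
    (b : V →ₗ[K] V →ₗ[K] V →ₗ[K] V)
    (hfund : ∀ x1 x2 x3 x4 x5 : V,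
      b x1 x2 (b x3 x4 x5) =
        b (b x1 x2 x3) x4 x5 + b x3 (b x1 x2 x4) x5 + b x3 x4 (b x1 x2 x5)) :
    (∀ x1 x2 y1 y2 : V,
      tbracket b (x1 ⊗ₜ[K] x2) (y1 ⊗ₜ[K] y2) =
        b x1 x2 y1 ⊗ₜ[K] y2 + y1 ⊗ₜ[K] b x1 x2 y2) ∧
    (∀ a c e : V ⊗[K] V,
      tbracket b a (tbracket b c e) =
        tbracket b (tbracket b a c) e + tbracket b c (tbracket b a e)) := by
  have key : ∀ x1 x2 y1 y2 : V,
      tbracket b (x1 ⊗ₜ[K] x2) (y1 ⊗ₜ[K] y2) =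
        b x1 x2 y1 ⊗ₜ[K] y2 + y1 ⊗ₜ[K] b x1 x2 y2 := by
    intro x1 x2 y1 y2
    simp [tbracket, LinearMap.rTensorHom, LinearMap.lTensorHom]
  refine ⟨key, fun a c e => ?_⟩
  induction a using TensorProduct.induction_on with
  | zero => simp
  | add a a' ha ha' => simp [ha, ha']; abel
  | tmul x1 x2 =>
    induction c using TensorProduct.induction_on with
    | zero => simp
    | add c c' hc hc' => simp [hc, hc']; abel
    | tmul y1 y2 =>
      induction e using TensorProduct.induction_on with
      | zero => simp
      | add e e' he he' => simp [he, he']; abel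
      | tmul z1 z2 =>
        simp only [key, map_add, LinearMap.add_apply, tmul_add, add_tmul]
        rw [hfund x1 x2 y1 y2 z1, hfund x1 x2 y1 y2 z2]
        simp only [add_tmul, tmul_add]
        abel
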